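/- arXiv:2311.02234 — 5 statements merged into one kernel-verified Lean document; each statement's English description precedes it below -/
import Mathlib

section
/- For every D ∈ 𝔰𝔦𝔪₂(3) and X ∈ SE₂(3), the matrix DX − XD lies in the tangent space of SE₂(3) at X; equivalently, X⁻¹(DX − XD) is an element of 𝔰𝔢₂(3). -/
open Matrix

noncomputable section

/-- Index type for 5×5 block matrices with blocks of sizes 3 and 2. -/
abbrev Idx : Type := Fin 3 ⊕ Fin 2

/-- The 3×3 skew-symmetric matrix `Ω^×` of a vector `Ω ∈ ℝ³`. -/
def skew (Ω : Fin 3 → ℝ) : Matrix (Fin 3) (Fin 3) ℝ :=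
  !![0, -Ω 2, Ω 1; Ω 2, 0, -Ω 0; -Ω 1, Ω 0, 0]

/-- Membership in the special orthogonal group SO(3). -/
def SO3 (R : Matrix (Fin 3) (Fin 3) ℝ) : Prop := Rᵀ * R = 1 ∧ R.det = 1

/-- The block matrix `[[R, V], [0, A]]`. -/
def mkAff (R : Matrix (Fin 3) (Fin 3) ℝ) (V : Matrix (Fin 3) (Fin 2) ℝ)
    (A : Matrix (Fin 2) (Fin 2) ℝ) : Matrix Idx Idx ℝ := fromBlocks R V 0 A

/-- Membership in the extended similarity group SIM₂(3). -/
def inSIM23 (Z : Matrix Idx Idx ℝ) : Prop :=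
  ∃ R V A, SO3 R ∧ IsUnit A.det ∧ Z = mkAff R V A

/-- Membership in the extended special Euclidean group SE₂(3). -/
def inSE23 (X : Matrix Idx Idx ℝ) : Prop :=
  ∃ R V, SO3 R ∧ X = mkAff R V 1

/-- The Lie algebra element `[[Ω^×, W], [0, S]]`. -/
def mkAlg (Ω : Fin 3 → ℝ) (W : Matrix (Fin 3) (Fin 2) ℝ)
    (S : Matrix (Fin 2) (Fin 2) ℝ) : Matrix Idx Idx ℝ := fromBlocks (skew Ω) W 0 S

/-- The 3×2 matrix with columns `a` and `b`. -/
def two (a b : Fin 3 → ℝ) : Matrix (Fin 3) (Fin 2) ℝ := Matrix.of fun i j => ![a i, b i] j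

attribute [local instance] Matrix.normedAddCommGroup Matrix.normedSpace

theorem skew_conj {R : Matrix (Fin 3) (Fin 3) ℝ} (hRt : Rᵀ * R = 1) (hdet : R.det = 1)
    (Ω : Fin 3 → ℝ) : skew (R *ᵥ Ω) * R = R * skew Ω := by
  have hinv : R * Rᵀ = 1 := mul_eq_one_comm.mp hRt
  have h1 : R⁻¹ = Rᵀ := inv_eq_right_inv hinv
  have h2 : Rᵀ = R.adjugate := by
    rw [← h1, inv_def, hdet, Ring.inverse_one, one_smul]
  rw [adjugate_fin_three] at h2
  have e00 : R 0 0 = R 1 1 * R 2 2 - R 1 2 * R 2 1 := congrFun (congrFun h2 0) 0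
  have e01 : R 0 1 = -(R 1 0 * R 2 2) + R 1 2 * R 2 0 := congrFun (congrFun h2 1) 0
  have e02 : R 0 2 = R 1 0 * R 2 1 - R 1 1 * R 2 0 := congrFun (congrFun h2 2) 0
  have e10 : R 1 0 = -(R 0 1 * R 2 2) + R 0 2 * R 2 1 := congrFun (congrFun h2 0) 1
  have e11 : R 1 1 = R 0 0 * R 2 2 - R 0 2 * R 2 0 := congrFun (congrFun h2 1) 1
  have e12 : R 1 2 = -(R 0 0 * R 2 1) + R 0 1 * R 2 0 := congrFun (congrFun h2 2) 1
  have e20 : R 2 0 = R 0 1 * R 1 2 - R 0 2 * R 1 1 := congrFun (congrFun h2 0) 2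
  have e21 : R 2 1 = -(R 0 0 * R 1 2) + R 0 2 * R 1 0 := congrFun (congrFun h2 1) 2
  have e22 : R 2 2 = R 0 0 * R 1 1 - R 0 1 * R 1 0 := congrFun (congrFun h2 2) 2
  ext i j
  fin_cases i <;> fin_cases j <;>
    simp [skew, Matrix.mul_apply, Matrix.mulVec, dotProduct,
      Fin.sum_univ_succ] <;> ring_nf
  · linear_combination Ω 1 * e02 - Ω 2 * e01
  · linear_combination -Ω 0 * e02 + Ω 2 * e00
  · linear_combination Ω 0 * e01 - Ω 1 * e00
  · linear_combination Ω 1 * e12 - Ω 2 * e11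
  · linear_combination -Ω 0 * e12 + Ω 2 * e10
  · linear_combination Ω 0 * e11 - Ω 1 * e10
  · linear_combination Ω 1 * e22 - Ω 2 * e21
  · linear_combination -Ω 0 * e22 + Ω 2 * e20
  · linear_combination Ω 0 * e21 - Ω 1 * e20

theorem skew_sub (a b : Fin 3 → ℝ) : skew (a - b) = skew a - skew b := by
  ext i j; fin_cases i <;> fin_cases j <;> simp [skew] <;> ring

/-- for `D ∈ 𝔰𝔦𝔪₂(3)` and `X ∈ SE₂(3)`, the matrix `DX − XD` lies in the
tangent space `X · 𝔰𝔢₂(3)`; equivalently `X⁻¹(DX − XD) ∈ 𝔰𝔢₂(3)`. -/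
theorem commutator_in_tangent (Ω : Fin 3 → ℝ) (W : Matrix (Fin 3) (Fin 2) ℝ)
    (S : Matrix (Fin 2) (Fin 2) ℝ) (RX : Matrix (Fin 3) (Fin 3) ℝ)
    (VX : Matrix (Fin 3) (Fin 2) ℝ) (hRX : SO3 RX) :
    ∃ (Ω' : Fin 3 → ℝ) (W' : Matrix (Fin 3) (Fin 2) ℝ),
      mkAlg Ω W S * mkAff RX VX 1 - mkAff RX VX 1 * mkAlg Ω W S =
        mkAff RX VX 1 * mkAlg Ω' W' 0 ∧
      (mkAff RX VX 1)⁻¹ *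
          (mkAlg Ω W S * mkAff RX VX 1 - mkAff RX VX 1 * mkAlg Ω W S) =
        mkAlg Ω' W' 0 := by
  obtain ⟨hRt, hdet⟩ := hRX
  have hinv : RX * RXᵀ = 1 := mul_eq_one_comm.mp hRt
  have hdetX : IsUnit (mkAff RX VX 1).det := by
    rw [mkAff, Matrix.det_fromBlocks_zero₂₁, hdet, Matrix.det_one, one_mul]
    exact isUnit_one
  have hM : mkAlg Ω W S * mkAff RX VX 1 - mkAff RX VX 1 * mkAlg Ω W S =
      mkAff RX VX 1 * mkAlg (RXᵀ *ᵥ Ω - Ω) (RXᵀ * (skew Ω * VX + W - RX * W - VX * S)) 0 := by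
    have key : skew (RX *ᵥ (RXᵀ *ᵥ Ω)) * RX = RX * skew (RXᵀ *ᵥ Ω) := by
      have hRt' : RXᵀᵀ * RXᵀ = 1 := by rwa [transpose_transpose]
      exact skew_conj hRt hdet _
    have hvec : RX *ᵥ (RXᵀ *ᵥ Ω) = Ω := by
      rw [Matrix.mulVec_mulVec, hinv, Matrix.one_mulVec]
    rw [hvec] at key
    have hmul : RX * (RXᵀ * (skew Ω * VX + W - RX * W - VX * S)) =
        skew Ω * VX + W - RX * W - VX * S := by
      rw [← Matrix.mul_assoc, hinv, Matrix.one_mul]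
    simp only [mkAlg, mkAff, Matrix.fromBlocks_multiply, skew_sub]
    rw [Matrix.mul_sub, ← key, hmul]
    have : ∀ (A B : Matrix (Fin 3) (Fin 3) ℝ) (C D : Matrix (Fin 3) (Fin 2) ℝ)
        (E F : Matrix (Fin 2) (Fin 2) ℝ),
        Matrix.fromBlocks A C (0 : Matrix (Fin 2) (Fin 3) ℝ) E -
          Matrix.fromBlocks B D 0 F = Matrix.fromBlocks (A - B) (C - D) 0 (E - F) := by
      intro A B C D E F
      ext i j
      cases i <;> cases j <;> simp [Matrix.fromBlocks]
    simp only [this, Matrix.mul_zero, Matrix.zero_mul, Matrix.mul_one, Matrix.one_mul,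
      add_zero, zero_add, sub_self]
    abel
  exact ⟨RXᵀ *ᵥ Ω - Ω, RXᵀ * (skew Ω * VX + W - RX * W - VX * S), hM, by
    rw [hM, Matrix.nonsing_inv_mul_cancel_left _ _ hdetX]⟩
end
end

section
/- Let Ẋ = XU + GX + DX − XD, X̂̇ = X̂U + GX̂ + DX̂ − X̂D + Z(Δ)Z⁻¹ X̂, and Ż = (G+D)Z − ZΓ, where X, X̂ ∈ SE₂(3), Z ∈ SIM₂(3), Δ ∈ 𝔰𝔢₂(3), Γ ∈ 𝔰𝔦𝔪₂(3), and G, D are fixed matrices. Then the error Ē := Z⁻¹ X X̂⁻¹ Z satisfies Ē̇ = ΓĒ − ĒΓ − ĒΔ. In particular, when Δ = 0 and Γ = 0 the error Ē is stationary. -/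
/-!
Pass to the frame of `Z`: `A := Z⁻¹ X` and `B := Z⁻¹ X̂` both evolve as `Ṁ = Λ M + M (U − D)`,
with `Λ = Γ` for `A` and `Λ = Γ + Δ` for `B`, because conjugating by `Z⁻¹` turns the innovation
`Z Δ Z⁻¹` into `Δ`. Since `Ē = A B⁻¹`, the common right term `U − D` cancels in the quotient and
`Ē̇ = Γ Ē − Ē (Γ + Δ)`.
-/

open Matrix

noncomputable section

attribute [local instance] Matrix.normedAddCommGroup Matrix.normedSpace

open Topology Filter

section MatrixCalculus

variable {𝕜 : Type*} [NontriviallyNormedField 𝕜] {l m n : Type*} {t : 𝕜}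

theorem HasDerivAt.matrix_apply [Fintype n] {A : 𝕜 → Matrix m n 𝕜} {A' : Matrix m n 𝕜}
    (hA : HasDerivAt A A' t) (i : m) (j : n) : HasDerivAt (fun s => A s i j) (A' i j) t :=
  hasDerivAt_pi.1 (hasDerivAt_pi.1 hA i) j

theorem HasDerivAt.matrix_mul [Fintype l] [Fintype m] [Fintype n]
    {A : 𝕜 → Matrix l m 𝕜} {B : 𝕜 → Matrix m n 𝕜} {A' : Matrix l m 𝕜} {B' : Matrix m n 𝕜}
    (hA : HasDerivAt A A' t) (hB : HasDerivAt B B' t) :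
    HasDerivAt (fun s => A s * B s) (A' * B t + A t * B') t := by
  refine hasDerivAt_pi.2 fun i => hasDerivAt_pi.2 fun j => ?_
  simp only [Matrix.mul_apply, Matrix.add_apply, ← Finset.sum_add_distrib]
  exact HasDerivAt.fun_sum fun k _ => (hA.matrix_apply i k).mul (hB.matrix_apply k j)

theorem HasDerivAt.matrix_inv [Fintype n] [DecidableEq n]
    {A : 𝕜 → Matrix n n 𝕜} {A' : Matrix n n 𝕜} (hA : HasDerivAt A A' t) (ht : IsUnit (A t).det) :
    HasDerivAt (fun s => (A s)⁻¹) (-((A t)⁻¹ * A' * (A t)⁻¹)) t := by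
  have hdet : ContinuousAt (fun s => (A s).det) t :=
    continuous_id.matrix_det.continuousAt.comp hA.continuousAt
  have hinv : ContinuousAt (fun s => (A s)⁻¹) t := by
    refine (continuousAt_matrix_inv _ ?_).comp hA.continuousAt
    rw [Ring.inverse_eq_inv']
    exact continuousAt_inv₀ ht.ne_zero
  have hslope : slope (fun s => (A s)⁻¹) t =ᶠ[𝓝[≠] t]
      fun s => -((A s)⁻¹ * slope A t s * (A t)⁻¹) := by
    filter_upwards [nhdsWithin_le_nhds (hdet.eventually_ne ht.ne_zero)] with s hs
    have hAs : IsUnit (A s) ↔ IsUnit (A t) := by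
      simp only [Matrix.isUnit_iff_isUnit_det, isUnit_iff_ne_zero.2 hs, ht]
    simp only [slope_def_module, Matrix.inv_sub_inv hAs, ← neg_sub (A s), Matrix.mul_neg,
      Matrix.neg_mul, smul_neg, Matrix.mul_smul, Matrix.smul_mul]
  refine hasDerivAt_iff_tendsto_slope.2 (Tendsto.congr' hslope.symm ?_)
  exact (((hinv.tendsto.mono_left nhdsWithin_le_nhds).mul hA.tendsto_slope).mul
    tendsto_const_nhds).neg

end MatrixCalculus

section ErrorDynamics

variable {𝕜 : Type*} [NontriviallyNormedField 𝕜] {n : Type*} [Fintype n] [DecidableEq n]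
  {t : 𝕜}

theorem HasDerivAt.matrix_mul_inv_of_same_right {X Y : 𝕜 → Matrix n n 𝕜} {P Q V : Matrix n n 𝕜}
    (hX : HasDerivAt X (P * X t + X t * V) t) (hY : HasDerivAt Y (Q * Y t + Y t * V) t)
    (hYt : IsUnit (Y t).det) :
    HasDerivAt (fun s => X s * (Y s)⁻¹) (P * (X t * (Y t)⁻¹) - X t * (Y t)⁻¹ * Q) t := by
  refine (hX.matrix_mul (hY.matrix_inv hYt)).congr_deriv ?_
  simp only [Matrix.add_mul, Matrix.mul_add, Matrix.mul_neg, Matrix.mul_assoc,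
    Matrix.nonsing_inv_mul_cancel_left _ _ hYt, Matrix.mul_nonsing_inv _ hYt, Matrix.mul_one]
  abel

theorem HasDerivAt.matrix_inv_mul_of_frame {Z X : 𝕜 → Matrix n n 𝕜} {M Γ N V : Matrix n n 𝕜}
    (hZ : HasDerivAt Z (M * Z t - Z t * Γ) t) (hZt : IsUnit (Z t).det)
    (hX : HasDerivAt X ((M + Z t * N * (Z t)⁻¹) * X t + X t * V) t) :
    HasDerivAt (fun s => (Z s)⁻¹ * X s) ((Γ + N) * ((Z t)⁻¹ * X t) + (Z t)⁻¹ * X t * V) t := by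
  refine ((hZ.matrix_inv hZt).matrix_mul hX).congr_deriv ?_
  simp only [Matrix.add_mul, Matrix.mul_add, Matrix.sub_mul, Matrix.mul_sub, Matrix.neg_mul,
    Matrix.mul_assoc, Matrix.nonsing_inv_mul_cancel_left _ _ hZt,
    Matrix.mul_nonsing_inv_cancel_left _ _ hZt]
  abel

end ErrorDynamics

theorem inSIM23.isUnit_det {Z : Matrix Idx Idx ℝ} (h : inSIM23 Z) : IsUnit Z.det := by
  obtain ⟨R, V, A, ⟨-, hR⟩, hA, rfl⟩ := h
  simpa [mkAff, Matrix.det_fromBlocks_zero₂₁, hR] using hA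

theorem inSE23.inSIM23 {X : Matrix Idx Idx ℝ} (h : inSE23 X) : inSIM23 X := by
  obtain ⟨R, V, hR, rfl⟩ := h
  exact ⟨R, V, 1, hR, by simp, rfl⟩

theorem synchronous_error_dynamics_general
    (X Xh Z U G D Γ Δ : ℝ → Matrix Idx Idx ℝ)
    (hXhse : ∀ t, inSE23 (Xh t)) (hZsim : ∀ t, inSIM23 (Z t))
    (hX : ∀ t, HasDerivAt X (X t * U t + G t * X t + D t * X t - X t * D t) t)
    (hXh : ∀ t, HasDerivAt Xh (Xh t * U t + G t * Xh t + D t * Xh t - Xh t * D t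
        + Z t * Δ t * (Z t)⁻¹ * Xh t) t)
    (hZ : ∀ t, HasDerivAt Z ((G t + D t) * Z t - Z t * Γ t) t) :
    (∀ t, HasDerivAt (fun s => (Z s)⁻¹ * X s * (Xh s)⁻¹ * Z s)
        (Γ t * ((Z t)⁻¹ * X t * (Xh t)⁻¹ * Z t)
          - ((Z t)⁻¹ * X t * (Xh t)⁻¹ * Z t) * Γ t
          - ((Z t)⁻¹ * X t * (Xh t)⁻¹ * Z t) * Δ t) t) ∧
    ((∀ t, Δ t = 0) → (∀ t, Γ t = 0) →
      ∀ t, HasDerivAt (fun s => (Z s)⁻¹ * X s * (Xh s)⁻¹ * Z s) 0 t) := by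
  have hZu s : IsUnit (Z s).det := (hZsim s).isUnit_det
  have hE s : (Z s)⁻¹ * X s * (Xh s)⁻¹ * Z s = (Z s)⁻¹ * X s * ((Z s)⁻¹ * Xh s)⁻¹ := by
    rw [Matrix.mul_inv_rev, Matrix.nonsing_inv_nonsing_inv _ (hZu s), Matrix.mul_assoc]
  have hdyn t : HasDerivAt (fun s => (Z s)⁻¹ * X s * (Xh s)⁻¹ * Z s)
      (Γ t * ((Z t)⁻¹ * X t * (Xh t)⁻¹ * Z t) - ((Z t)⁻¹ * X t * (Xh t)⁻¹ * Z t) * Γ t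
        - ((Z t)⁻¹ * X t * (Xh t)⁻¹ * Z t) * Δ t) t := by
    have hA := (hZ t).matrix_inv_mul_of_frame (hZu t) (N := 0) (V := U t - D t)
      ((hX t).congr_deriv (by noncomm_ring))
    have hB := (hZ t).matrix_inv_mul_of_frame (hZu t) (N := Δ t) (V := U t - D t)
      ((hXh t).congr_deriv (by noncomm_ring))
    have hBu : IsUnit ((Z t)⁻¹ * Xh t).det := by
      rw [Matrix.det_mul]
      exact (Matrix.isUnit_nonsing_inv_det _ (hZu t)).mul (hXhse t).inSIM23.isUnit_det
    simp only [hE]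
    refine (hA.matrix_mul_inv_of_same_right hB hBu).congr_deriv ?_
    rw [add_zero, Matrix.mul_add, sub_sub]
  exact ⟨hdyn, fun hΔ hΓ t => by simpa [hΔ t, hΓ t] using hdyn t⟩

/-- synchronous error dynamics. With the observer architecture as stated, the
error `Ē = Z⁻¹ X X̂⁻¹ Z` satisfies `Ē̇ = ΓĒ − ĒΓ − ĒΔ`; in particular it is stationary
when `Δ = 0` and `Γ = 0`. -/
theorem synchronous_error_dynamics
    (X Xh Z U G D Γ Δ : ℝ → Matrix Idx Idx ℝ)
    (hXse : ∀ t, inSE23 (X t)) (hXhse : ∀ t, inSE23 (Xh t)) (hZsim : ∀ t, inSIM23 (Z t))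
    (hΔalg : ∀ t, ∃ Ω W, Δ t = mkAlg Ω W 0)
    (hΓalg : ∀ t, ∃ Ω W S, Γ t = mkAlg Ω W S)
    (hX : ∀ t, HasDerivAt X (X t * U t + G t * X t + D t * X t - X t * D t) t)
    (hXh : ∀ t, HasDerivAt Xh (Xh t * U t + G t * Xh t + D t * Xh t - Xh t * D t
        + Z t * Δ t * (Z t)⁻¹ * Xh t) t)
    (hZ : ∀ t, HasDerivAt Z ((G t + D t) * Z t - Z t * Γ t) t) :
    (∀ t, HasDerivAt (fun s => (Z s)⁻¹ * X s * (Xh s)⁻¹ * Z s)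
        (Γ t * ((Z t)⁻¹ * X t * (Xh t)⁻¹ * Z t)
          - ((Z t)⁻¹ * X t * (Xh t)⁻¹ * Z t) * Γ t
          - ((Z t)⁻¹ * X t * (Xh t)⁻¹ * Z t) * Δ t) t) ∧
    ((∀ t, Δ t = 0) → (∀ t, Γ t = 0) →
      ∀ t, HasDerivAt (fun s => (Z s)⁻¹ * X s * (Xh s)⁻¹ * Z s) 0 t) :=
  synchronous_error_dynamics_general X Xh Z U G D Γ Δ hXhse hZsim hX hXh hZ
end
end

section
/- Let U ∈ SO(3), Λ = diag(1,−1,−1), and e₁ the first standard basis vector of ℝ³. Define Q(s) = UΛU^T exp(s (U e₁)^×) and f(s) = tr(I₃ − Q(s)). Then f(0) = 4, f′(0) = 0, and f″(0) = −2; in particular, for all sufficiently small s ≠ 0, tr(I₃ − Q(s)) < 4, so the equilibrium R = UΛU^T is not a local minimum of R ↦ tr(I₃ − R) restricted near {R : tr(R) = −1}. -/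
open Matrix

noncomputable section

attribute [local instance] Matrix.normedAddCommGroup Matrix.normedSpace

/-!
Conjugation by `U ∈ SO(3)` intertwines `(Ue₁)^×` with `e₁^×` and hence their exponentials, so
`Q(s) = U Λ R(s) Uᵀ` with `R(s) = exp(s e₁^×)` the rotation by `s` about the first axis, and
`f(s) = 3 - tr(Λ R(s)) = 2 + 2 cos s`. All four claims are then facts about `2 + 2 cos s`.
The rotation formula for `R(s)` comes from the embedding of `ℝ × ℂ` into `3 × 3` real matrices
as an `ℝ`-algebra, under which `s e₁^×` is the image of `(0, s i)`.
-/

open NormedSpace Real Filter Topology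

def rotX (θ : ℝ) : Matrix (Fin 3) (Fin 3) ℝ :=
  !![1, 0, 0; 0, cos θ, -sin θ; 0, sin θ, cos θ]

def prodComplexToMatrix : (ℝ × ℂ) →ₐ[ℝ] Matrix (Fin 3) (Fin 3) ℝ where
  toFun p := !![p.1, 0, 0; 0, p.2.re, -p.2.im; 0, p.2.im, p.2.re]
  map_one' := by
    ext i j
    fin_cases i <;> fin_cases j <;> simp [one_apply]
  map_mul' p q := by
    ext i j
    fin_cases i <;> fin_cases j <;>
      simp [mul_apply, Fin.sum_univ_succ, Complex.mul_re, Complex.mul_im] <;> ring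
  map_zero' := by
    ext i j
    fin_cases i <;> fin_cases j <;> simp
  map_add' p q := by
    ext i j
    fin_cases i <;> fin_cases j <;> simp; ring
  commutes' r := by
    ext i j
    fin_cases i <;> fin_cases j <;> simp [algebraMap_eq_diagonal, diagonal]

lemma exp_smul_skew_e₁ (s : ℝ) : exp (s • skew ![1, 0, 0]) = rotX s := by
  -- `map_exp` needs a normed algebra structure; the operator norm induces the same topology
  -- as the ambient one, but only up to unfolding, hence the `erw` below.
  let _ : SeminormedRing (Matrix (Fin 3) (Fin 3) ℝ) := Matrix.linftyOpSemiNormedRing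
  let _ : NormedRing (Matrix (Fin 3) (Fin 3) ℝ) := Matrix.linftyOpNormedRing
  let _ : NormedAlgebra ℝ (Matrix (Fin 3) (Fin 3) ℝ) := Matrix.linftyOpNormedAlgebra
  have hcont : Continuous prodComplexToMatrix :=
    prodComplexToMatrix.toLinearMap.continuous_of_finiteDimensional
  have hgen : s • skew ![1, 0, 0] = prodComplexToMatrix (0, s * Complex.I) := by
    ext i j
    fin_cases i <;> fin_cases j <;> simp [skew, prodComplexToMatrix]
  have hexp : exp ((0 : ℝ), s * Complex.I) = (1, Complex.exp (s * Complex.I)) := by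
    ext
    · rw [Prod.fst_exp, NormedSpace.exp_zero]
    · rw [Prod.snd_exp, Complex.exp_eq_exp_ℂ]
  rw [hgen]
  erw [← map_exp prodComplexToMatrix hcont]
  rw [hexp, Complex.exp_mul_I]
  ext i j
  fin_cases i <;> fin_cases j <;>
    simp [rotX, prodComplexToMatrix, Complex.cos_ofReal_re, Complex.sin_ofReal_re]

section SpecialOrthogonal

variable {U : Matrix (Fin 3) (Fin 3) ℝ}

lemma SO3.isUnit (hU : SO3 U) : IsUnit U :=
  (isUnit_iff_isUnit_det U).mpr (hU.2 ▸ isUnit_one)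

lemma SO3.transpose_eq_adjugate (hU : SO3 U) : Uᵀ = U.adjugate :=
  calc Uᵀ = Uᵀ * (U * U.adjugate) := by rw [mul_adjugate, hU.2, one_smul, mul_one]
    _ = U.adjugate := by rw [← mul_assoc, hU.1, one_mul]

-- Entrywise, this is the identity `Uᵀ = adj U` in cofactor form.
lemma skew_mulVec (hU : SO3 U) (v : Fin 3 → ℝ) : skew (U *ᵥ v) = U * skew v * Uᵀ := by
  have h := hU.transpose_eq_adjugate
  rw [adjugate_fin_three, ← Matrix.ext_iff] at h
  simp only [Fin.forall_fin_succ, Fin.succ_zero_eq_one, Fin.succ_one_eq_two, IsEmpty.forall_iff,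
    and_true, transpose_apply, of_apply, cons_val', cons_val_zero, cons_val_succ,
    cons_val_fin_one] at h
  ext i j
  fin_cases i <;> fin_cases j <;>
    simp [skew, mulVec, mul_apply, dotProduct, Fin.sum_univ_succ] <;> grind

lemma exp_smul_skew_mulVec (hU : SO3 U) (v : Fin 3 → ℝ) (s : ℝ) :
    exp (s • skew (U *ᵥ v)) = U * exp (s • skew v) * Uᵀ := by
  rw [← inv_eq_left_inv hU.1, ← exp_conj U _ hU.isUnit, inv_eq_left_inv hU.1, skew_mulVec hU,
    mul_smul_comm, smul_mul_assoc]

end SpecialOrthogonal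

lemma trace_conj_mul_conj {n R : Type*} [Fintype n] [DecidableEq n] [CommRing R]
    {U : Matrix n n R} (hU : Uᵀ * U = 1) (A B : Matrix n n R) :
    (U * A * Uᵀ * (U * B * Uᵀ)).trace = (A * B).trace := by
  rw [show U * A * Uᵀ * (U * B * Uᵀ) = U * (A * (Uᵀ * U) * B) * Uᵀ by noncomm_ring,
    trace_mul_cycle, ← mul_assoc, hU, one_mul, mul_one]

lemma trace_diagonal_mul_rotX (θ : ℝ) :
    (diagonal ![1, -1, -1] * rotX θ).trace = 1 - 2 * cos θ := by
  simp only [rotX, trace_fin_three, diagonal_mul, of_apply, cons_val', cons_val_zero,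
    cons_val_one, cons_val, cons_val_fin_one, mul_one, one_mul, neg_mul]
  ring

lemma eventually_cos_lt_one : ∀ᶠ s in 𝓝[≠] (0 : ℝ), cos s < 1 := by
  have hpi : Set.Ioo (-(2 * π)) (2 * π) ∈ 𝓝 (0 : ℝ) :=
    Ioo_mem_nhds (by linarith [pi_pos]) (by linarith [pi_pos])
  filter_upwards [self_mem_nhdsWithin, mem_nhdsWithin_of_mem_nhds hpi] with s hs0 hs
  exact (cos_le_one s).lt_of_ne fun h => hs0 ((cos_eq_one_iff_of_lt_of_lt hs.1 hs.2).mp h)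

/-- instability of the equilibria with `tr(R) = −1`: with
`Q(s) = UΛUᵀ exp(s(Ue₁)^×)` and `f(s) = tr(I₃ − Q(s))`, one has `f(0) = 4`, `f′(0) = 0`,
`f″(0) = −2`, so `tr(I₃ − Q(s)) < 4` for all sufficiently small `s ≠ 0`. -/
theorem unstable_equilibrium_taylor (U : Matrix (Fin 3) (Fin 3) ℝ) (hU : SO3 U) :
    let Λ : Matrix (Fin 3) (Fin 3) ℝ := Matrix.diagonal ![1, -1, -1]
    let e₁ : Fin 3 → ℝ := ![1, 0, 0]
    let Q : ℝ → Matrix (Fin 3) (Fin 3) ℝ :=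
      fun s => U * Λ * Uᵀ * NormedSpace.exp (s • skew (U.mulVec e₁))
    let f : ℝ → ℝ := fun s => (1 - Q s).trace
    f 0 = 4 ∧ deriv f 0 = 0 ∧ deriv (deriv f) 0 = -2 ∧
      ∀ᶠ s in nhdsWithin 0 {0}ᶜ, f s < 4 := by
  intro Λ e₁ Q f
  have hf : f = fun s => 2 + 2 * cos s := funext fun s => by
    simp only [f, Q, exp_smul_skew_mulVec hU, exp_smul_skew_e₁, trace_sub, trace_one,
      trace_conj_mul_conj hU.1, Λ, e₁, trace_diagonal_mul_rotX, Fintype.card_fin, Nat.cast_ofNat]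
    ring
  have hf' : deriv f = fun s => -(2 * sin s) := by
    rw [hf]; ext s; simp
  refine ⟨by norm_num [hf], by simp [hf'], by simp [hf'], ?_⟩
  filter_upwards [eventually_cos_lt_one] with s hs
  simp only [hf]
  linarith
end
end

section
/- With the correction terms W_Δ = k_p R_Zᵀ(y − ŷ)C_pᵀA_Z^{-T}, W_Γ = −k_p R_Zᵀ(y − V_Z A_Z⁻¹C_p)C_pᵀA_Z^{-T}, where y = V C_p, ŷ = V̂ C_p, and with V_Ē = R_Zᵀ(VA_Z − V_Z) − R_Ē R_Zᵀ(V̂A_Z − V_Z), one has the algebraic identity (I − R_Ē)W_Γ − R_Ē W_Δ = −k_p V_Ē A_Z⁻¹ C_p C_pᵀ A_Z^{-T}. -/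
open Matrix

noncomputable section

attribute [local instance] Matrix.normedAddCommGroup Matrix.normedSpace

/-- with the GNSS position correction terms, one has the algebraic identity
`(I − R_Ē)W_Γ − R_Ē W_Δ = −k_p V_Ē A_Z⁻¹ C_p C_pᵀ A_Z^{-T}`. -/
theorem correction_term_identity (kp : ℝ) (hkp : 0 < kp)
    (RZ RE : Matrix (Fin 3) (Fin 3) ℝ) (V Vh VZ : Matrix (Fin 3) (Fin 2) ℝ)
    (AZ : Matrix (Fin 2) (Fin 2) ℝ)
    (hRZ : SO3 RZ) (hRE : SO3 RE) (hAZ : IsUnit AZ.det) :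
    let Cp : Matrix (Fin 2) (Fin 1) ℝ := !![0; 1]
    let y := V * Cp
    let yh := Vh * Cp
    let WΔ := kp • (RZᵀ * (y - yh) * Cpᵀ * (AZ⁻¹)ᵀ)
    let WΓ := -(kp • (RZᵀ * (y - VZ * AZ⁻¹ * Cp) * Cpᵀ * (AZ⁻¹)ᵀ))
    let VE := RZᵀ * (V * AZ - VZ) - RE * (RZᵀ * (Vh * AZ - VZ))
    (1 - RE) * WΓ - RE * WΔ = -(kp • (VE * AZ⁻¹ * Cp * Cpᵀ * (AZ⁻¹)ᵀ)) := by
  intro Cp y yh WΔ WΓ VE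
  have h : ∀ X : Matrix (Fin 2) (Fin 1) ℝ, AZ * (AZ⁻¹ * X) = X := by
    intro X
    rw [← Matrix.mul_assoc, Matrix.mul_nonsing_inv _ hAZ, Matrix.one_mul]
  simp only [y, yh, WΔ, WΓ, VE, Matrix.sub_mul, Matrix.mul_sub, Matrix.smul_mul,
    Matrix.mul_smul, Matrix.one_mul, Matrix.mul_assoc, h, smul_sub, Matrix.mul_neg,
    neg_sub, smul_neg, neg_smul]
  module
end
end

section
/- Suppose V̇_Ē = −V_Ē S_Γ + M where S_Γ = −(k_p/2)A_Z⁻¹C_pC_pᵀA_Z^{-T} + (1/2)A_ZᵀK_qA_Z and M = −k_p V_Ē A_Z⁻¹C_pC_pᵀA_Z^{-T}. Then d/dt |V_Ē|² = −k_p |V_Ē A_Z⁻¹ C_p|² − tr(A_Z V_Ēᵀ V_Ē A_Zᵀ K_q), which is ≤ 0 whenever k_p > 0 and K_q is positive semidefinite. -/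
open Matrix

noncomputable section

attribute [local instance] Matrix.normedAddCommGroup Matrix.normedSpace

/-! `d/dt tr(Vᵀ V) = 2 tr(Vᵀ V̇)`. Substituting the dynamics and cycling the trace turns the
`S_Γ` and `M` terms into `−k_p tr(XᵀX)` with `X = V A_Z⁻¹ C_p` and `−tr(Y K_q Yᵀ)` with
`Y = V A_Zᵀ`; both traces are nonnegative, the second because `Y K_q Yᵀ` is positive semidefinite. -/

section TraceForm

variable {m n p : Type*} [Fintype m] [Fintype n] [Fintype p]

theorem hasDerivAt_trace_transpose_mul_self {V : ℝ → Matrix m n ℝ} {D : Matrix m n ℝ} {t : ℝ}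
    (hV : HasDerivAt V D t) :
    HasDerivAt (fun s => ((V s)ᵀ * V s).trace) (2 * ((V t)ᵀ * D).trace) t := by
  let frobenius : Matrix m n ℝ →ₗ[ℝ] Matrix m n ℝ →ₗ[ℝ] ℝ :=
    LinearMap.mk₂ ℝ (fun A B => (Aᵀ * B).trace)
      (by simp [Matrix.add_mul]) (by simp) (by simp [Matrix.mul_add]) (by simp)
  refine (frobenius.toContinuousBilinearMap.hasDerivAt_of_bilinear (fun _ => hV) fun _ => hV)
    |>.congr_deriv ?_
  change ((V t)ᵀ * D).trace + (Dᵀ * V t).trace = _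
  rw [← trace_transpose (Dᵀ * V t), transpose_mul, transpose_transpose]
  ring

theorem trace_transpose_mul_self_nonneg (X : Matrix m n ℝ) : 0 ≤ (Xᵀ * X).trace :=
  (posSemidef_conjTranspose_mul_self X).trace_nonneg

theorem trace_transpose_mul_self_mul_nonneg {K : Matrix n n ℝ} (hK : K.PosSemidef)
    (X : Matrix m n ℝ) : 0 ≤ (Xᵀ * X * K).trace := by
  rw [Matrix.mul_assoc, trace_mul_comm]
  exact (hK.mul_mul_conjTranspose_same X).trace_nonneg

/-- `B` plays the role of `A_Z⁻¹`, and the second factor is `V̇_Ē = −V_Ē S_Γ + M`. -/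
theorem two_mul_trace_transpose_mul_velocity (kp : ℝ) (V : Matrix m n ℝ) (A B K : Matrix n n ℝ)
    (C : Matrix n p ℝ) :
    2 * (Vᵀ * (-(V * (-((kp / 2) • (B * C * Cᵀ * Bᵀ)) + (1 / 2 : ℝ) • (Aᵀ * K * A)))
      + -(kp • (V * B * C * Cᵀ * Bᵀ)))).trace
      = -(kp * ((V * B * C)ᵀ * (V * B * C)).trace) - (A * Vᵀ * V * Aᵀ * K).trace := by
  have hC : (Vᵀ * V * B * C * Cᵀ * Bᵀ).trace = ((V * B * C)ᵀ * (V * B * C)).trace := by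
    rw [Matrix.mul_assoc _ Cᵀ, trace_mul_comm, transpose_mul, transpose_mul]
    simp only [Matrix.mul_assoc]
  have hK : (Vᵀ * V * Aᵀ * K * A).trace = (A * Vᵀ * V * Aᵀ * K).trace := by
    rw [trace_mul_comm]
    simp only [Matrix.mul_assoc]
  simp only [Matrix.mul_add, Matrix.mul_neg, Matrix.mul_smul, trace_add, trace_neg, trace_smul,
    smul_eq_mul, ← Matrix.mul_assoc, hC, hK]
  ring

end TraceForm

/-- with `V̇_Ē = −V_Ē S_Γ + M` for the stated `S_Γ` and `M`, one has
`d/dt |V_Ē|² = −k_p |V_Ē A_Z⁻¹ C_p|² − tr(A_Z V_Ēᵀ V_Ē A_Zᵀ K_q) ≤ 0` whenever `k_p > 0`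
and `K_q` is positive semidefinite. -/
theorem lyapunov_velocity_decrease (kp : ℝ) (hkp : 0 < kp)
    (Kq : Matrix (Fin 2) (Fin 2) ℝ) (hKq : Kq.PosSemidef)
    (V : ℝ → Matrix (Fin 3) (Fin 2) ℝ) (AZ : ℝ → Matrix (Fin 2) (Fin 2) ℝ)
    (Cp : Matrix (Fin 2) (Fin 1) ℝ)
    (hV : ∀ t, HasDerivAt V
      (-(V t * (-((kp / 2) • ((AZ t)⁻¹ * Cp * Cpᵀ * ((AZ t)⁻¹)ᵀ))
          + (1 / 2 : ℝ) • ((AZ t)ᵀ * Kq * AZ t)))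
        + -(kp • (V t * (AZ t)⁻¹ * Cp * Cpᵀ * ((AZ t)⁻¹)ᵀ))) t) :
    ∀ t, HasDerivAt (fun s => ((V s)ᵀ * V s).trace)
        (-(kp * ((V t * (AZ t)⁻¹ * Cp)ᵀ * (V t * (AZ t)⁻¹ * Cp)).trace)
          - (AZ t * (V t)ᵀ * V t * (AZ t)ᵀ * Kq).trace) t ∧
      -(kp * ((V t * (AZ t)⁻¹ * Cp)ᵀ * (V t * (AZ t)⁻¹ * Cp)).trace)
          - (AZ t * (V t)ᵀ * V t * (AZ t)ᵀ * Kq).trace ≤ 0 := by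
  intro t
  have hderiv := hasDerivAt_trace_transpose_mul_self (hV t)
  rw [two_mul_trace_transpose_mul_velocity] at hderiv
  refine ⟨hderiv, ?_⟩
  have hCp := mul_nonneg hkp.le (trace_transpose_mul_self_nonneg (V t * (AZ t)⁻¹ * Cp))
  have hKq : 0 ≤ (AZ t * (V t)ᵀ * V t * (AZ t)ᵀ * Kq).trace := by
    simpa only [transpose_mul, transpose_transpose, Matrix.mul_assoc] using
      trace_transpose_mul_self_mul_nonneg hKq (V t * (AZ t)ᵀ)
  linarith
end
end
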